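/- Each of the five sets {e}, {b}, {c}, {g,h}, {a,d,f,i} is a module of G and they partition the vertex set of G, but G is not the join of its induced subgraphs on these five parts; in particular, the vertices b and c lie in different parts yet are not adjacent in G. (This shows the output of the Java implementation of the ICALP 2008 algorithm, which reports a series root node with these five children, is incorrect.) -/

import Mathlib

inductive Vtx : Type
  | a | b | c | d | e | f | g | h | i
deriving DecidableEq

instance : Fintype Vtx :=
  ⟨{Vtx.a, Vtx.b, Vtx.c, Vtx.d, Vtx.e, Vtx.f, Vtx.g, Vtx.h, Vtx.i}, by intro x; cases x <;> simp⟩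

open Vtx

/-- The edges of the counterexample graph `G`. -/
def edgeList : List (Vtx × Vtx) :=
  [(a,b),(a,c),(a,d),(a,e),(a,g),(a,h),(a,i),
   (b,d),(b,e),(b,f),(b,g),(b,h),(b,i),
   (c,d),(c,f),(c,g),(c,h),(c,i),
   (d,e),(d,g),(d,h),(d,i),
   (e,f),(e,i),
   (f,g),(f,h),
   (g,i),(h,i)]

/-- The counterexample graph `G` on vertex set `{a,...,i}`. -/
def G : SimpleGraph Vtx := SimpleGraph.fromRel (fun x y => (x, y) ∈ edgeList)

/-- `M` is a module of the simple graph `H`: every vertex outside `M` is adjacent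
to all of `M` or to none of `M`. -/
def IsModule {α : Type*} (H : SimpleGraph α) (M : Set α) : Prop :=
  ∀ v ∉ M, (∀ x ∈ M, H.Adj v x) ∨ (∀ x ∈ M, ¬ H.Adj v x)

/-- Two sets overlap if they intersect but neither contains the other. -/
def Overlap {α : Type*} (M M' : Set α) : Prop :=
  (M ∩ M').Nonempty ∧ ¬ M ⊆ M' ∧ ¬ M' ⊆ M

/-- `M` is a strong module of `H`: a module overlapping no module of `H`. -/
def IsStrongModule {α : Type*} (H : SimpleGraph α) (M : Set α) : Prop :=
  IsModule H M ∧ ∀ M' : Set α, IsModule H M' → ¬ Overlap M M'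

/-- The five parts reported as children of the series root node by the Java
implementation of the ICALP 2008 algorithm. -/
def fiveParts : Set (Set Vtx) := {{e}, {b}, {c}, {g, h}, {a, d, f, i}}

instance : DecidableRel G.Adj :=
  inferInstanceAs (DecidableRel (SimpleGraph.fromRel fun x y => (x, y) ∈ edgeList).Adj)

instance {α : Type*} [Fintype α] (H : SimpleGraph α) [DecidableRel H.Adj] (M : Set α)
    [DecidablePred (· ∈ M)] : Decidable (IsModule H M) := by
  unfold IsModule; infer_instance

lemma not_forall_adj_of_not_adj {α : Type*} {H : SimpleGraph α} {P : Set (Set α)}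
    {M₁ M₂ : Set α} (h₁ : M₁ ∈ P) (h₂ : M₂ ∈ P) (hne : M₁ ≠ M₂) {x y : α} (hx : x ∈ M₁)
    (hy : y ∈ M₂) (hxy : ¬ H.Adj x y) :
    ¬ ∀ M₁ ∈ P, ∀ M₂ ∈ P, M₁ ≠ M₂ → ∀ x ∈ M₁, ∀ y ∈ M₂, H.Adj x y :=
  fun h => hxy (h M₁ h₁ M₂ h₂ hne x hx y hy)

/-- each of the five sets `{e}`, `{b}`, `{c}`, `{g,h}`, `{a,d,f,i}` is a
module of `G` and they partition the vertex set, but `G` is not the join of its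
induced subgraphs on these parts: `b` and `c` lie in distinct parts yet are not
adjacent in `G`. -/
theorem stmt_15 :
    (∀ M ∈ fiveParts, IsModule G M) ∧
    ⋃₀ fiveParts = Set.univ ∧
    fiveParts.Pairwise Disjoint ∧
    ¬ (∀ M₁ ∈ fiveParts, ∀ M₂ ∈ fiveParts, M₁ ≠ M₂ →
        ∀ x ∈ M₁, ∀ y ∈ M₂, G.Adj x y) ∧
    (b ∈ ({b} : Set Vtx) ∧ c ∈ ({c} : Set Vtx) ∧
      ({b} : Set Vtx) ≠ ({c} : Set Vtx) ∧ ¬ G.Adj b c) := by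
  have hbc : ¬ G.Adj b c := by decide
  have hne : ({b} : Set Vtx) ≠ {c} := by simp
  refine ⟨?_, ?_, ?_, ?_, rfl, rfl, hne, hbc⟩
  · simp only [fiveParts, Set.forall_mem_insert, Set.mem_singleton_iff, forall_eq]
    decide
  · ext v
    cases v <;> simp [fiveParts]
  · simp [fiveParts, Set.pairwise_insert]
  · exact not_forall_adj_of_not_adj (by simp [fiveParts]) (by simp [fiveParts]) hne rfl rfl hbc
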